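/- arXiv:2503.21849 — 3 statements merged into one kernel-verified Lean document; each statement's English description precedes it below -/
import Mathlib

section
/- Fix γ ∈ (0,1) and μ > 0. Let g_0 : ℝ → ℝ ∪ {−∞} be concave, and define recursively for n ≥ 1: p_n(x) = π[ 1 − γ + sup_{y∈ℝ} ( g_{n−1}(y) − min(1,μ)·max(x − y, 0) ) ], s_n = sup{ x ∈ ℝ : p_n(x) ≥ γ }, and g_n(x) = π[ 1 − γ + sup_{y∈ℝ} ( g_{n−1}(y) − |x − y| ) − μ·max(s_n − x, 0) ]. Then for every n ≥ 1, both p_n and g_n are concave. -/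
/-- `π(x) = x` if `x ≥ 0`, and `−∞` otherwise. -/
noncomputable def piE (x : EReal) : EReal := if 0 ≤ x then x else ⊥

/-- Concavity for `ℝ ∪ {−∞}`-valued functions (modeled as `ℝ → EReal`). -/
def ConcaveE (h : ℝ → EReal) : Prop :=
  ∀ x x' t : ℝ, 0 ≤ t → t ≤ 1 →
    ((t : EReal) * h x + ((1 - t : ℝ) : EReal) * h x') ≤ h (t * x + (1 - t) * x')

/-- `Φ_ξ[g](x) = 1 − γ + sup_y ( g(y) − |x − y| ) − μ·max(ξ − x, 0)`. -/
noncomputable def Phi (γ μ : ℝ) (g : ℝ → EReal) (ξ x : ℝ) : EReal :=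
  ((1 - γ : ℝ) : EReal) + (⨆ y : ℝ, g y - ((|x - y| : ℝ) : EReal))
    - ((μ * max (ξ - x) 0 : ℝ) : EReal)

/-- The phenotypic profile
`p(x) = π[ 1 − γ + sup_y ( g(y) − min(1,μ)·max(x − y, 0) ) ]` built from a
genotypic profile `g`. -/
noncomputable def pFun (γ μ : ℝ) (g : ℝ → EReal) (x : ℝ) : EReal :=
  piE (((1 - γ : ℝ) : EReal) +
    ⨆ y : ℝ, g y - ((min 1 μ * max (x - y) 0 : ℝ) : EReal))

/-- The recursive dynamic: `g_n(x) = π[ Φ_{s_n}[g_{n−1}](x) ]` where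
`s_n = sup{ x : p_n(x) ≥ γ }` and `p_n = pFun γ μ g_{n−1}`. -/
noncomputable def gseq (γ μ : ℝ) (g0 : ℝ → EReal) : ℕ → ℝ → EReal
  | 0 => g0
  | n + 1 =>
      fun x => piE (Phi γ μ (gseq γ μ g0 n)
        (sSup {ξ : ℝ | (γ : EReal) ≤ pFun γ μ (gseq γ μ g0 n) ξ}) x)

/-!
`p_n` and `g_n` arise from the concave `g_{n-1}` by three concavity-preserving operations. The
sup-convolution `x ↦ ⨆ y, g y - k x y` with a jointly convex kernel `k` is concave, being a
partial supremum of a function jointly concave in `(x, y)`; subtracting a convex real function,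
or adding a constant, keeps concavity; and so does the truncation `π`, since a convex
combination of nonnegative values is nonnegative. The kernels `min 1 μ * max (x - y) 0` and
`|x - y|` and the penalty `μ * max (s_n - x) 0` are convex because `μ ≥ 0`, so induction on `n`
applies whatever the threshold `s_n` is.
-/

open Set

namespace EReal

lemma coe_mul_iSup_le {ι : Sort*} {t : ℝ} (ht : 0 < t) {f : ι → EReal} {T : EReal}
    (H : ∀ i, (t : EReal) * f i ≤ T) : (t : EReal) * ⨆ i, f i ≤ T := by
  have ht' : (0 : EReal) < t := by exact_mod_cast ht
  rw [mul_comm, ← le_div_iff_mul_le ht' (coe_ne_top t)]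
  exact iSup_le fun i => (le_div_iff_mul_le ht' (coe_ne_top t)).2 (mul_comm (f i) t ▸ H i)

lemma exists_lt_coe_mul_of_lt_coe_mul_iSup {ι : Sort*} {t : ℝ} (ht : 0 < t) {f : ι → EReal}
    {a : EReal} (ha : a < (t : EReal) * ⨆ i, f i) : ∃ i, a < (t : EReal) * f i := by
  by_contra! H
  exact ha.not_ge (coe_mul_iSup_le ht H)

lemma coe_mul_iSup_add_coe_mul_iSup_le {ι κ : Sort*} {t s : ℝ} (ht : 0 < t) (hs : 0 < s)
    {f : ι → EReal} {f' : κ → EReal} {T : EReal}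
    (H : ∀ i j, (t : EReal) * f i + (s : EReal) * f' j ≤ T) :
    (t : EReal) * (⨆ i, f i) + (s : EReal) * (⨆ j, f' j) ≤ T := by
  refine add_le_of_forall_lt fun a ha b hb => ?_
  obtain ⟨i, hi⟩ := exists_lt_coe_mul_of_lt_coe_mul_iSup ht ha
  obtain ⟨j, hj⟩ := exists_lt_coe_mul_of_lt_coe_mul_iSup hs hb
  exact (add_lt_add hi hj).le.trans (H i j)

lemma coe_mul_sub_add_coe_mul_sub_le {t s u v w : ℝ} (ht : 0 ≤ t) (hs : 0 ≤ s)
    {a b c : EReal} (habc : (t : EReal) * a + (s : EReal) * b ≤ c) (hw : w ≤ t * u + s * v) :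
    (t : EReal) * (a - u) + (s : EReal) * (b - v) ≤ c - w := by
  rw [mul_sub_of_nonneg_of_ne_top (by exact_mod_cast ht) (coe_ne_top t),
    mul_sub_of_nonneg_of_ne_top (by exact_mod_cast hs) (coe_ne_top s),
    sub_eq_add_neg, sub_eq_add_neg, add_add_add_comm, ← coe_mul, ← coe_mul, ← coe_neg,
    ← coe_neg, ← coe_add, ← neg_add_rev, coe_neg, ← sub_eq_add_neg, add_comm (s * v)]
  exact sub_le_sub habc (by exact_mod_cast hw)

end EReal

namespace ConcaveE

/-- Reduces to `0 < t < 1`, where a `⊥` value carries positive weight and absorbs the sum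
(at the endpoints it has weight `0`, and `0 * ⊥ = 0`). -/
lemma of_mem_Ioo {h : ℝ → EReal}
    (H : ∀ x x' t : ℝ, 0 < t → t < 1 →
      (t : EReal) * h x + ((1 - t : ℝ) : EReal) * h x' ≤ h (t * x + (1 - t) * x')) :
    ConcaveE h := by
  intro x x' t ht0 ht1
  rcases ht0.eq_or_lt with rfl | ht0
  · simp
  rcases ht1.eq_or_lt with rfl | ht1
  · simp
  exact H x x' t ht0 ht1

lemma sub_convexOn {h : ℝ → EReal} (hh : ConcaveE h) {m : ℝ → ℝ} (hm : ConvexOn ℝ univ m) :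
    ConcaveE fun x => h x - (m x : EReal) := by
  intro x x' t ht0 ht1
  refine EReal.coe_mul_sub_add_coe_mul_sub_le ht0 (sub_nonneg.2 ht1) (hh x x' t ht0 ht1) ?_
  simpa using hm.2 (mem_univ x) (mem_univ x') ht0 (sub_nonneg.2 ht1) (add_sub_cancel t 1)

lemma const_add {h : ℝ → EReal} (hh : ConcaveE h) (c : ℝ) :
    ConcaveE fun x => (c : EReal) + h x := by
  convert hh.sub_convexOn (convexOn_const (-c) convex_univ) using 2 with x
  rw [EReal.coe_neg, sub_eq_add_neg, neg_neg, add_comm]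

lemma piE_comp {h : ℝ → EReal} (hh : ConcaveE h) : ConcaveE fun x => piE (h x) := by
  refine of_mem_Ioo fun x x' t ht0 ht1 => ?_
  have hs0 : (0 : ℝ) < 1 - t := sub_pos.2 ht1
  unfold piE
  by_cases hx : 0 ≤ h x
  · by_cases hx' : 0 ≤ h x'
    · have hmid := hh x x' t ht0.le ht1.le
      have hcomb : 0 ≤ (t : EReal) * h x + ((1 - t : ℝ) : EReal) * h x' :=
        add_nonneg (mul_nonneg (by exact_mod_cast ht0.le) hx)
          (mul_nonneg (by exact_mod_cast hs0.le) hx')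
      rwa [if_pos hx, if_pos hx', if_pos (hcomb.trans hmid)]
    · rw [if_neg hx', EReal.coe_mul_bot_of_pos hs0, EReal.add_bot]
      exact bot_le
  · rw [if_neg hx, EReal.coe_mul_bot_of_pos ht0, EReal.bot_add]
    exact bot_le

lemma iSup_sub {g : ℝ → EReal} (hg : ConcaveE g) {k : ℝ → ℝ → ℝ}
    (hk : ConvexOn ℝ univ fun p : ℝ × ℝ => k p.1 p.2) :
    ConcaveE fun x => ⨆ y, g y - (k x y : EReal) := by
  refine of_mem_Ioo fun x x' t ht0 ht1 => ?_
  have hs0 : (0 : ℝ) < 1 - t := sub_pos.2 ht1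
  refine EReal.coe_mul_iSup_add_coe_mul_iSup_le ht0 hs0 fun y y' => ?_
  refine le_trans ?_ (le_iSup _ (t * y + (1 - t) * y'))
  refine EReal.coe_mul_sub_add_coe_mul_sub_le ht0.le hs0.le (hg y y' t ht0.le ht1.le) ?_
  simpa using hk.2 (mem_univ (x, y)) (mem_univ (x', y')) ht0.le hs0.le (add_sub_cancel t 1)

end ConcaveE

lemma convexOn_mul_max_zero {c : ℝ} (hc : 0 ≤ c) : ConvexOn ℝ univ fun z : ℝ => c * max z 0 :=
  ((convexOn_id convex_univ).sup (convexOn_const 0 convex_univ)).smul hc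

lemma convexOn_mul_max_sub_zero {c : ℝ} (hc : 0 ≤ c) :
    ConvexOn ℝ univ fun p : ℝ × ℝ => c * max (p.1 - p.2) 0 :=
  (convexOn_mul_max_zero hc).comp_linearMap (LinearMap.fst ℝ ℝ ℝ - LinearMap.snd ℝ ℝ ℝ)

lemma convexOn_abs_sub : ConvexOn ℝ univ fun p : ℝ × ℝ => |p.1 - p.2| :=
  (convexOn_norm convex_univ).comp_linearMap (LinearMap.fst ℝ ℝ ℝ - LinearMap.snd ℝ ℝ ℝ)

lemma convexOn_mul_max_const_sub_zero {c : ℝ} (hc : 0 ≤ c) (ξ : ℝ) :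
    ConvexOn ℝ univ fun x : ℝ => c * max (ξ - x) 0 :=
  (convexOn_mul_max_zero hc).comp_affineMap (AffineMap.const ℝ ℝ ξ - AffineMap.id ℝ ℝ)

lemma concaveE_pFun (γ : ℝ) {μ : ℝ} (hμ : 0 ≤ μ) {g : ℝ → EReal} (hg : ConcaveE g) :
    ConcaveE (pFun γ μ g) :=
  ((hg.iSup_sub (convexOn_mul_max_sub_zero (le_min zero_le_one hμ))).const_add _).piE_comp

lemma concaveE_Phi (γ : ℝ) {μ : ℝ} (hμ : 0 ≤ μ) {g : ℝ → EReal} (hg : ConcaveE g) (ξ : ℝ) :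
    ConcaveE (Phi γ μ g ξ) :=
  ((hg.iSup_sub convexOn_abs_sub).const_add _).sub_convexOn
    (convexOn_mul_max_const_sub_zero hμ ξ)

lemma concaveE_gseq (γ : ℝ) {μ : ℝ} (hμ : 0 ≤ μ) {g0 : ℝ → EReal} (hg0 : ConcaveE g0) :
    ∀ n, ConcaveE (gseq γ μ g0 n)
  | 0 => hg0
  | n + 1 => (concaveE_Phi γ hμ (concaveE_gseq γ hμ hg0 n) _).piE_comp

theorem pn_gn_concave_general (γ μ : ℝ) (hμ : 0 < μ)
    (g0 : ℝ → EReal) (hg0 : ConcaveE g0) :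
    ∀ n : ℕ, 1 ≤ n →
      ConcaveE (pFun γ μ (gseq γ μ g0 (n - 1))) ∧ ConcaveE (gseq γ μ g0 n) :=
  fun n _ => ⟨concaveE_pFun γ hμ.le (concaveE_gseq γ hμ.le hg0 (n - 1)),
    concaveE_gseq γ hμ.le hg0 n⟩

/-- starting from a concave `g₀`, all the profiles `p_n` and `g_n`
(`n ≥ 1`) are concave. -/
theorem pn_gn_concave (γ μ : ℝ) (hγ : γ ∈ Set.Ioo (0 : ℝ) 1) (hμ : 0 < μ)
    (g0 : ℝ → EReal) (hg0 : ConcaveE g0) :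
    ∀ n : ℕ, 1 ≤ n →
      ConcaveE (pFun γ μ (gseq γ μ g0 (n - 1))) ∧ ConcaveE (gseq γ μ g0 n) :=
  pn_gn_concave_general γ μ hμ g0 hg0
end

section
/- For every μ > 0 and all y, ξ ∈ ℝ, one has sup_{x∈ℝ} ( −|x − y| − μ·max(ξ − x, 0) ) = −min(μ, 1)·max(ξ − y, 0). -/
/-- for every `μ > 0` and all `y, ξ ∈ ℝ`,
`sup_{x∈ℝ} ( −|x − y| − μ·max(ξ − x, 0) ) = −min(μ, 1)·max(ξ − y, 0)`. -/
theorem sup_abs_penalty (μ : ℝ) (hμ : 0 < μ) (y ξ : ℝ) :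
    (⨆ x : ℝ, (-|x - y| - μ * max (ξ - x) 0)) = -(min μ 1 * max (ξ - y) 0) := by
  have hub : ∀ x : ℝ, -|x - y| - μ * max (ξ - x) 0 ≤ -(min μ 1 * max (ξ - y) 0) := by
    intro x
    rcases abs_cases (x - y) with ⟨h1, h2⟩ | ⟨h1, h2⟩ <;>
    rcases max_cases (ξ - x) 0 with ⟨h3, h4⟩ | ⟨h3, h4⟩ <;>
    rcases max_cases (ξ - y) 0 with ⟨h5, h6⟩ | ⟨h5, h6⟩ <;>
    rcases min_cases μ 1 with ⟨h7, h8⟩ | ⟨h7, h8⟩ <;>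
    rw [h1, h3, h5, h7] <;> nlinarith
  have hbdd : BddAbove (Set.range fun x : ℝ => -|x - y| - μ * max (ξ - x) 0) :=
    ⟨_, by rintro z ⟨x, rfl⟩; exact hub x⟩
  apply le_antisymm (ciSup_le hub)
  rcases le_total μ 1 with h | h
  · have := le_ciSup hbdd y
    simpa [min_eq_left h] using this
  · have := le_ciSup hbdd (max y ξ)
    have hx : |max y ξ - y| = max (ξ - y) 0 := by
      rcases le_total y ξ with h'|h' <;> simp [max_eq_left, max_eq_right, h', abs_of_nonneg, abs_of_nonpos, sub_nonneg, sub_nonpos] <;> linarith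
    have hz : max (ξ - max y ξ) 0 = 0 := by
      rcases le_total y ξ with h'|h' <;> simp [max_eq_left, max_eq_right, h'] <;> linarith
    rw [hx, hz] at this
    rw [min_eq_right h]
    simpa using this
end

section
/- Fix γ ∈ (0,1) and μ > 0, and let g : ℝ → ℝ ∪ {−∞} be any function. Define F(ξ) = sup_{x∈ℝ} Φ_ξ[g](x). Then F(ξ) = 1 − γ + sup_{y∈ℝ} ( g(y) − min(μ,1)·max(ξ − y, 0) ) for every ξ ∈ ℝ, and consequently the function ξ ↦ F(ξ) is non-increasing. -/
open Set

namespace EReal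

noncomputable def addCoeOrderIso (r : ℝ) : EReal ≃o EReal where
  toFun x := x + r
  invFun x := x - r
  left_inv _ := add_sub_cancel_right
  right_inv _ := sub_add_cancel
  map_rel_iff' := (addLECancellable_coe r).add_le_add_iff_right

lemma iSup_add_coe {ι : Sort*} (f : ι → EReal) (r : ℝ) :
    (⨆ i, f i) + r = ⨆ i, f i + r :=
  (addCoeOrderIso r).map_iSup f

lemma coe_add_iSup {ι : Sort*} (r : ℝ) (f : ι → EReal) :
    r + ⨆ i, f i = ⨆ i, r + f i := by
  simp only [add_comm (r : EReal), iSup_add_coe]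

lemma iSup_sub_coe {ι : Sort*} (f : ι → EReal) (r : ℝ) :
    (⨆ i, f i) - r = ⨆ i, f i - r := by
  simp only [sub_eq_add_neg, ← coe_neg, iSup_add_coe]

lemma sub_coe_add (a : EReal) (r s : ℝ) : a - ((r + s : ℝ) : EReal) = a - r - s := by
  induction a <;> norm_cast
  rw [sub_sub]

lemma iSup_sub_coe_of_isLeast {ι : Sort*} (a : EReal) {f : ι → ℝ} {m : ℝ}
    (h : IsLeast (range f) m) : ⨆ i, a - (f i : EReal) = a - m := by
  refine le_antisymm (iSup_le fun i => sub_le_sub le_rfl ?_) ?_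
  · exact EReal.coe_le_coe_iff.2 (h.2 ⟨i, rfl⟩)
  · obtain ⟨i, hi⟩ := h.1
    exact hi ▸ le_iSup (fun i => a - (f i : EReal)) i

end EReal

lemma min_one_mul_posPart_le {μ : ℝ} (hμ : 0 ≤ μ) (ξ x y : ℝ) :
    min μ 1 * max (ξ - y) 0 ≤ |x - y| + μ * max (ξ - x) 0 := by
  have h0 : 0 ≤ min μ 1 := le_min hμ zero_le_one
  have h1 : min μ 1 ≤ 1 := min_le_right μ 1
  have h2 : min μ 1 ≤ μ := min_le_left μ 1
  have hxy := le_abs_self (x - y)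
  rcases le_total ξ y with hy | hy
  · rw [max_eq_right (sub_nonpos.2 hy), mul_zero]
    positivity
  rw [max_eq_left (sub_nonneg.2 hy)]
  rcases le_total ξ x with hx | hx
  · rw [max_eq_right (sub_nonpos.2 hx)]
    nlinarith
  · rw [max_eq_left (sub_nonneg.2 hx)]
    calc min μ 1 * (ξ - y) = min μ 1 * (x - y) + min μ 1 * (ξ - x) := by ring
      _ ≤ |x - y| + μ * (ξ - x) :=
        add_le_add ((mul_le_mul_of_nonneg_left hxy h0).trans (mul_le_of_le_one_left (abs_nonneg _) h1))
          (mul_le_mul_of_nonneg_right h2 (sub_nonneg.2 hx))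

lemma isLeast_range_abs_sub_add_mul_posPart {μ : ℝ} (hμ : 0 ≤ μ) (ξ y : ℝ) :
    IsLeast (range fun x => |x - y| + μ * max (ξ - x) 0) (min μ 1 * max (ξ - y) 0) := by
  refine ⟨?_, ?_⟩
  · rcases le_total μ 1 with h | h
    · exact ⟨y, by simp [min_eq_left h]⟩
    · refine ⟨max ξ y, ?_⟩
      simp [min_eq_right h, ← max_sub_sub_right, abs_of_nonneg]
  · rintro _ ⟨x, rfl⟩
    exact min_one_mul_posPart_le hμ ξ x y

lemma Phi_eq_iSup (γ μ : ℝ) (g : ℝ → EReal) (ξ x : ℝ) :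
    Phi γ μ g ξ x =
      ((1 - γ : ℝ) : EReal) + ⨆ y, g y - ((|x - y| + μ * max (ξ - x) 0 : ℝ) : EReal) := by
  simp only [Phi, add_sub_assoc, EReal.iSup_sub_coe, EReal.sub_coe_add]

theorem F_formula_and_antitone_general (γ μ : ℝ) (hμ : 0 < μ)
    (g : ℝ → EReal) :
    (∀ ξ : ℝ, (⨆ x : ℝ, Phi γ μ g ξ x) =
        ((1 - γ : ℝ) : EReal) +
          ⨆ y : ℝ, g y - ((min μ 1 * max (ξ - y) 0 : ℝ) : EReal)) ∧
    Antitone (fun ξ : ℝ => ⨆ x : ℝ, Phi γ μ g ξ x) := by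
  have formula (ξ : ℝ) : (⨆ x : ℝ, Phi γ μ g ξ x) =
      ((1 - γ : ℝ) : EReal) + ⨆ y : ℝ, g y - ((min μ 1 * max (ξ - y) 0 : ℝ) : EReal) := by
    simp only [Phi_eq_iSup, ← EReal.coe_add_iSup]
    rw [iSup_comm]
    simp only [EReal.iSup_sub_coe_of_isLeast _ (isLeast_range_abs_sub_add_mul_posPart hμ.le ξ _)]
  refine ⟨formula, fun ξ ξ' hξ => ?_⟩
  simp only [formula]
  refine add_le_add le_rfl (iSup_mono fun y => EReal.sub_le_sub le_rfl ?_)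
  refine EReal.coe_le_coe_iff.2 (mul_le_mul_of_nonneg_left ?_ (le_min hμ.le zero_le_one))
  exact max_le_max_right 0 (by linarith)

/-- `F(ξ) = sup_x Φ_ξ[g](x)` satisfies
`F(ξ) = 1 − γ + sup_y ( g(y) − min(μ,1)·max(ξ − y, 0) )` and is non-increasing. -/
theorem F_formula_and_antitone (γ μ : ℝ) (hγ : γ ∈ Set.Ioo (0 : ℝ) 1) (hμ : 0 < μ)
    (g : ℝ → EReal) :
    (∀ ξ : ℝ, (⨆ x : ℝ, Phi γ μ g ξ x) =
        ((1 - γ : ℝ) : EReal) +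
          ⨆ y : ℝ, g y - ((min μ 1 * max (ξ - y) 0 : ℝ) : EReal)) ∧
    Antitone (fun ξ : ℝ => ⨆ x : ℝ, Phi γ μ g ξ x) :=
  F_formula_and_antitone_general γ μ hμ g
end
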